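/- arXiv:1405.5397 — 5 statements merged into one kernel-verified Lean document; each statement's English description precedes it below -/
import Mathlib

section
/- Let G = (V ∪ {s}, E) be a finite connected multigraph with sink s. If a stable sandpile configuration η is recurrent (i.e. η is ample for every nonempty subset F ⊆ V, meaning there exists x ∈ F with η(x) ≥ deg_F(x), where deg_F(x) is the number of edges from x to other vertices of F), then Dhar's burning algorithm burns every vertex: defining B_0 = {s}, U_0 = V, and inductively B_j = {v ∈ U_{j-1} : η(v) ≥ deg_{U_{j-1}}(v)}, U_j = U_{j-1} \ B_j, there exists J such that U_J = ∅. -/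
open Finset

variable {V : Type*}

/-- One step of Dhar's burning algorithm: from the set `U` of currently unburnt
vertices, remove the burnable ones, i.e. keep `v` iff `η v < deg_U v`.
Here `a u v` is the number of edges between the non-sink vertices `u` and `v`. -/
def Ustep [Fintype V] (a : V → V → ℕ) (η : V → ℕ) (U : Finset V) : Finset V :=
  U.filter fun v => η v < ∑ y ∈ U, a v y

/-- The unburnt sets `U_j` of Dhar's burning algorithm (with `U_0 = V`, the sink
being burnt at time `0`). -/
def Useq [Fintype V] (a : V → V → ℕ) (η : V → ℕ) : ℕ → Finset V
  | 0 => Finset.univ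
  | j + 1 => Ustep a η (Useq a η j)

/-- On a finite connected multigraph with sink `s` (edge
multiplicities `a` between non-sink vertices, `as v` edges from `v` to the sink),
if the stable configuration `η` is ample for every nonempty `F ⊆ V`, then
Dhar's burning algorithm burns every vertex: `U_J = ∅` for some `J`. -/
theorem stmt0 [Fintype V] [DecidableEq V]
    (a : V → V → ℕ) (as : V → ℕ) (η : V → ℕ)
    (hsymm : ∀ u v, a u v = a v u) (hloop : ∀ v, a v v = 0)
    (hconn : ∀ F : Finset V, F.Nonempty → ∃ x ∈ F, 0 < as x + ∑ y ∈ Fᶜ, a x y)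
    (hstable : ∀ v, η v < as v + ∑ y, a v y)
    (hample : ∀ F : Finset V, F.Nonempty → ∃ x ∈ F, ∑ y ∈ F, a x y ≤ η x) :
    ∃ J, Useq a η J = ∅ := by
  have key : ∀ U : Finset V, U.Nonempty → Ustep a η U ⊂ U := by
    intro U hU
    obtain ⟨x, hx, hxa⟩ := hample U hU
    refine Finset.ssubset_iff_of_subset (Finset.filter_subset _ _) |>.mpr ⟨x, hx, ?_⟩
    simp only [Ustep, Finset.mem_filter, not_and, not_lt]
    exact fun _ => hxa
  have hcard : ∀ j, (Useq a η j).card + j ≤ Fintype.card V ∨ Useq a η j = ∅ := by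
    intro j
    induction j with
    | zero => left; simp [Useq]
    | succ n ih =>
      rcases ih with h | h
      · rcases (Useq a η n).eq_empty_or_nonempty with he | hne
        · right; simp [Useq, Ustep, he]
        · left
          have := Finset.card_lt_card (key _ hne)
          show (Ustep a η (Useq a η n)).card + (n+1) ≤ _
          omega
      · right; simp [Useq, Ustep, h]
  rcases hcard (Fintype.card V + 1) with h | h
  · omega
  · exact ⟨_, h⟩
end

section
/- Conversely, if Dhar's burning algorithm applied to a stable configuration η on a finite connected multigraph G with sink s burns every vertex (U_J = ∅ for some J), then η is ample for every nonempty finite subset F ⊆ V. -/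
open Finset

variable {V : Type*}

/-- Conversely, if Dhar's burning algorithm applied to a stable
configuration `η` on a finite connected multigraph with sink burns every vertex
(`U_J = ∅` for some `J`), then `η` is ample for every nonempty `F ⊆ V`:
there is `x ∈ F` with `deg_F x ≤ η x`. -/
theorem stmt1 [Fintype V] [DecidableEq V]
    (a : V → V → ℕ) (as : V → ℕ) (η : V → ℕ)
    (hsymm : ∀ u v, a u v = a v u) (hloop : ∀ v, a v v = 0)
    (hconn : ∀ F : Finset V, F.Nonempty → ∃ x ∈ F, 0 < as x + ∑ y ∈ Fᶜ, a x y)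
    (hstable : ∀ v, η v < as v + ∑ y, a v y)
    (hburn : ∃ J, Useq a η J = ∅) :
    ∀ F : Finset V, F.Nonempty → ∃ x ∈ F, ∑ y ∈ F, a x y ≤ η x := by
  intro F hF
  by_contra h
  push_neg at h
  obtain ⟨J, hJ⟩ := hburn
  have key : ∀ j, F ⊆ Useq a η j := by
    intro j
    induction j with
    | zero => exact subset_univ F
    | succ j ih =>
      intro x hx
      simp only [Useq, Ustep, mem_filter]
      refine ⟨ih hx, lt_of_lt_of_le (h x hx) ?_⟩
      exact Finset.sum_le_sum_of_subset ih
  obtain ⟨x, hx⟩ := hF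
  exact absurd (key J hx) (by simp [hJ])
end

section
/- In Dhar's burning algorithm applied to a recurrent configuration η on a finite connected multigraph with sink s, for a vertex v burnt at step j, letting m_v be the number of oriented edges f with tail v and head in B_0 ∪ ⋯ ∪ B_{j-1}, and F_v the set of oriented edges e with tail v and head in B_{j-1}, one has deg(v) − m_v ≤ η(v) ≤ deg(v) − m_v + |F_v| − 1; i.e. η(v) = deg(v) − m_v + ℓ for a unique ℓ with 0 ≤ ℓ < |F_v|. -/
open Finset

variable {V : Type*}

/-- In Dhar's burning algorithm applied to a recurrent
configuration `η` on a finite connected multigraph with sink `s`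
(`as v` = number of edges from `v` to `s`), for a vertex `v` burnt at step
`j ≥ 1`, with `m_v` the number of oriented edges from `v` with head burnt
before time `j` (the sink and the vertices not in `U_{j-1}`), and `|F_v|`
the number of oriented edges from `v` with head in `B_{j-1}`, one has
`deg v - m_v ≤ η v ≤ deg v - m_v + |F_v| - 1`, i.e. `η v = deg v - m_v + ℓ`
for a unique `ℓ` with `0 ≤ ℓ < |F_v|` (stated additively to avoid truncated
subtraction). -/
theorem stmt3 [Fintype V] [DecidableEq V]
    (a : V → V → ℕ) (as : V → ℕ) (η : V → ℕ)
    (hsymm : ∀ u v, a u v = a v u) (hloop : ∀ v, a v v = 0)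
    (hconn : ∀ F : Finset V, F.Nonempty → ∃ x ∈ F, 0 < as x + ∑ y ∈ Fᶜ, a x y)
    (hstable : ∀ v, η v < as v + ∑ y, a v y)
    (hample : ∀ F : Finset V, F.Nonempty → ∃ x ∈ F, ∑ y ∈ F, a x y ≤ η x) :
    ∀ (j : ℕ) (v : V), 1 ≤ j → v ∈ Useq a η (j - 1) → v ∉ Useq a η j →
      (as v + ∑ y, a v y) ≤
          η v + (as v + ∑ w ∈ (Useq a η (j - 1))ᶜ, a v w) ∧
      η v + (as v + ∑ w ∈ (Useq a η (j - 1))ᶜ, a v w) <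
          (as v + ∑ y, a v y) +
            (if j = 1 then as v
             else ∑ w ∈ Useq a η (j - 2) \ Useq a η (j - 1), a v w) ∧
      ∃! ℓ : ℕ,
        ℓ < (if j = 1 then as v
             else ∑ w ∈ Useq a η (j - 2) \ Useq a η (j - 1), a v w) ∧
        η v + (as v + ∑ w ∈ (Useq a η (j - 1))ᶜ, a v w) =
          (as v + ∑ y, a v y) + ℓ := by
  intro j v hj hv1 hv2
  obtain ⟨k, rfl⟩ : ∃ k, j = k + 1 := ⟨j - 1, (Nat.succ_pred_eq_of_pos hj).symm⟩
  simp only [Nat.add_sub_cancel] at hv1 ⊢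
  have hburn : ∑ y ∈ Useq a η k, a v y ≤ η v := by
    by_contra h
    push_neg at h
    exact hv2 (Finset.mem_filter.mpr ⟨hv1, h⟩)
  have hsplit : ∑ y ∈ Useq a η k, a v y + ∑ y ∈ (Useq a η k)ᶜ, a v y = ∑ y, a v y :=
    Finset.sum_add_sum_compl _ _
  have hupper : η v < ∑ y ∈ Useq a η k, a v y +
      (if k + 1 = 1 then as v
        else ∑ w ∈ Useq a η (k + 1 - 2) \ Useq a η k, a v w) := by
    rcases Nat.eq_zero_or_pos k with rfl | hk
    · have h1 : (∑ y ∈ Useq a η 0, a v y) = ∑ y, a v y := by simp [Useq]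
      have := hstable v
      simp only [if_pos rfl, if_true]
      omega
    · obtain ⟨m, rfl⟩ : ∃ m, k = m + 1 := ⟨k - 1, (Nat.succ_pred_eq_of_pos hk).symm⟩
      have hmem := Finset.mem_filter.mp hv1
      have hsub : Useq a η (m + 1) ⊆ Useq a η m := Finset.filter_subset _ _
      have hsd : ∑ w ∈ Useq a η m \ Useq a η (m + 1), a v w
          + ∑ w ∈ Useq a η (m + 1), a v w = ∑ w ∈ Useq a η m, a v w :=
        Finset.sum_sdiff hsub
      have hif : m + 1 + 1 ≠ 1 := by omega
      rw [if_neg hif]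
      have h2 : m + 1 + 1 - 2 = m := by omega
      rw [h2]
      have := hmem.2
      omega
  refine ⟨by omega, by omega, ?_⟩
  refine ⟨η v + (as v + ∑ w ∈ (Useq a η k)ᶜ, a v w) - (as v + ∑ y, a v y),
    ⟨by omega, by omega⟩, ?_⟩
  intro m hm
  omega
end

section
/- In a one-ended infinite tree t (every two infinite self-avoiding paths have finite symmetric difference) spanning a locally finite graph component, for every finite set D of vertices, the set desc_t(D) of vertices whose unique infinite path in t meets D is finite. -/
/-- a ray (infinite self-avoiding path) in the graph `t` -/
def IsRay {V : Type*} (t : SimpleGraph V) (r : ℕ → V) : Prop :=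
  Function.Injective r ∧ ∀ n, t.Adj (r n) (r (n + 1))

/-!
In a one-ended tree two rays from the same vertex coincide: if they split, acyclicity keeps
their tails apart, and then their symmetric difference is infinite. Hence `desc t {x}` is the
set of vertices whose ray passes through `x`. If it were infinite, local finiteness would let
us step from `x` to a neighbour off the ray of `x` whose descendant set is still infinite,
and repeat forever. The vertices visited form a ray that leaves the ray of `x` for good,
contradicting one-endedness again.
-/

section

open Set Function

variable {V : Type*} {t : SimpleGraph V} {r r₁ r₂ : ℕ → V}

theorem IsRay.shift (hr : IsRay t r) (k : ℕ) : IsRay t (fun i => r (k + i)) :=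
  ⟨fun a b hab => by simpa using hr.1 hab, fun n => hr.2 (k + n)⟩

def rayWalk (t : SimpleGraph V) {r : ℕ → V} (h : ∀ n, t.Adj (r n) (r (n + 1))) :
    (n : ℕ) → t.Walk (r 0) (r n)
  | 0 => .nil
  | n + 1 => (rayWalk t h n).concat (h n)

theorem support_rayWalk (h : ∀ n, t.Adj (r n) (r (n + 1))) (n : ℕ) :
    (rayWalk t h n).support = (List.range (n + 1)).map r := by
  induction n with
  | zero => rfl
  | succ n ih =>
    rw [rayWalk, SimpleGraph.Walk.support_concat, ih, List.range_succ (n := n + 1)]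
    simp

theorem IsRay.isPath_rayWalk (hr : IsRay t r) (n : ℕ) : (rayWalk t hr.2 n).IsPath := by
  rw [SimpleGraph.Walk.isPath_def, support_rayWalk]
  exact List.nodup_range.map hr.1

theorem IsRay.apply_ne_of_apply_one_ne (hacyc : t.IsAcyclic) (h₁ : IsRay t r₁) (h₂ : IsRay t r₂)
    (h0 : r₁ 0 = r₂ 0) (h1 : r₁ 1 ≠ r₂ 1) {a b : ℕ} (ha : 1 ≤ a) (hb : 1 ≤ b) :
    r₁ a ≠ r₂ b := by
  intro he
  have hpaths : (⟨rayWalk t h₁.2 a, h₁.isPath_rayWalk a⟩ : t.Path (r₁ 0) (r₁ a)) =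
      ⟨(rayWalk t h₂.2 b).copy h0.symm he.symm, by simpa using h₂.isPath_rayWalk b⟩ :=
    (hacyc.subsingleton_path _ _).elim _ _
  have hsecond := congrArg (fun p : t.Path _ _ => p.1.support[1]?) hpaths
  simp only [SimpleGraph.Walk.support_copy, support_rayWalk, List.getElem?_map,
    List.getElem?_range (show 1 < a + 1 by omega), List.getElem?_range (show 1 < b + 1 by omega),
    Option.map_some, Option.some.injEq] at hsecond
  exact h1 hsecond

def OneEnded (t : SimpleGraph V) : Prop :=
  ∀ r₁ r₂ : ℕ → V, IsRay t r₁ → IsRay t r₂ → (symmDiff (range r₁) (range r₂)).Finite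

theorem OneEnded.exists_apply_mem_range (hone : OneEnded t) (h₁ : IsRay t r₁)
    (h₂ : IsRay t r₂) (k : ℕ) : ∃ a, k ≤ a ∧ r₁ a ∈ range r₂ := by
  by_contra! h
  refine ((Ici_infinite k).image h₁.1.injOn).mono ?_ (hone r₁ r₂ h₁ h₂)
  rintro _ ⟨a, ha, rfl⟩
  exact Or.inl ⟨mem_range_self a, h a ha⟩

theorem OneEnded.apply_one_eq (hone : OneEnded t) (hacyc : t.IsAcyclic) (h₁ : IsRay t r₁)
    (h₂ : IsRay t r₂) (h0 : r₁ 0 = r₂ 0) : r₁ 1 = r₂ 1 := by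
  by_contra h1
  obtain ⟨a, ha, b, hb⟩ := hone.exists_apply_mem_range h₁ h₂ 1
  rcases Nat.eq_zero_or_pos b with rfl | hb0
  · have := h₁.1 (h0.trans hb)
    omega
  · exact h₁.apply_ne_of_apply_one_ne hacyc h₂ h0 h1 ha hb0 hb.symm

theorem OneEnded.eq_of_apply_zero_eq (hone : OneEnded t) (hacyc : t.IsAcyclic) (h₁ : IsRay t r₁)
    (h₂ : IsRay t r₂) (h0 : r₁ 0 = r₂ 0) : r₁ = r₂ := by
  funext n
  induction n with
  | zero => exact h0
  | succ n ih => simpa using hone.apply_one_eq hacyc (h₁.shift n) (h₂.shift n) (by simpa using ih)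

def desc (t : SimpleGraph V) (D : Set V) : Set V :=
  {v | ∃ r : ℕ → V, IsRay t r ∧ r 0 = v ∧ ∃ n, r n ∈ D}

theorem desc_eq_biUnion (D : Set V) : desc t D = ⋃ x ∈ D, desc t {x} := by
  ext v
  simp only [desc, mem_iUnion, mem_ofPred_eq, mem_singleton_iff, exists_prop]
  exact ⟨fun ⟨r, hr, hr0, n, hn⟩ => ⟨r n, hn, r, hr, hr0, n, rfl⟩,
    fun ⟨_, hx, r, hr, hr0, n, hn⟩ => ⟨r, hr, hr0, n, hn ▸ hx⟩⟩

section LocallyFiniteOneEndedTree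

variable (hlf : ∀ v : V, {w | t.Adj v w}.Finite) (hacyc : t.IsAcyclic) (hone : OneEnded t)
include hlf hacyc hone

theorem exists_isRay_cons_infinite_desc {ρ : ℕ → V} (hρ : IsRay t ρ)
    (hinf : (desc t {ρ 0}).Infinite) :
    ∃ w, IsRay t (Stream'.cons w ρ) ∧ (desc t {w}).Infinite := by
  have hfin : {w | IsRay t (Stream'.cons w ρ)}.Finite :=
    (hlf (ρ 0)).subset fun w hw => (hw.2 0).symm
  have hcover : desc t {ρ 0} \ {ρ 0} ⊆ ⋃ w ∈ {w | IsRay t (Stream'.cons w ρ)}, desc t {w} := by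
    rintro v ⟨⟨r, hr, rfl, n, hn⟩, hv⟩
    obtain ⟨k, rfl⟩ : ∃ k, n = k + 1 :=
      Nat.exists_eq_succ_of_ne_zero (by rintro rfl; exact hv hn)
    have htail : (fun i => r (k + 1 + i)) = ρ := hone.eq_of_apply_zero_eq hacyc (hr.shift _) hρ hn
    have hcons : (fun i => r (k + i)) = Stream'.cons (r k) ρ := by
      funext i
      cases i with
      | zero => rfl
      | succ i =>
        rw [← htail]
        show r (k + (i + 1)) = r (k + 1 + i)
        exact congrArg r (by omega)
    exact mem_biUnion (show IsRay t (Stream'.cons (r k) ρ) from hcons ▸ hr.shift k)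
      ⟨r, hr, rfl, k, rfl⟩
  by_contra! hfinite
  exact (hinf.sdiff (finite_singleton _)) ((hfin.biUnion hfinite).subset hcover)

theorem exists_isRay_forall_notMem_range {ρ : ℕ → V} (hρ : IsRay t ρ)
    (hinf : (desc t {ρ 0}).Infinite) : ∃ s, IsRay t s ∧ ∀ k, 1 ≤ k → s k ∉ range ρ := by
  have : Nonempty V := ⟨ρ 0⟩
  choose! W hW using fun ρ (h : IsRay t ρ ∧ (desc t {ρ 0}).Infinite) =>
    exists_isRay_cons_infinite_desc hlf hacyc hone h.1 h.2
  -- The branch is `k ↦ f^[k] ρ 0`, where stage `f^[k] ρ` is `ρ` with `k` vertices prepended.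
  set f : (ℕ → V) → ℕ → V := fun ρ => Stream'.cons (W ρ) ρ
  have hf : ∀ k, IsRay t (f^[k] ρ) ∧ (desc t {f^[k] ρ 0}).Infinite := by
    intro k
    induction k with
    | zero => exact ⟨hρ, hinf⟩
    | succ k ih => rw [iterate_succ_apply']; exact hW _ ih
  have hshift : ∀ σ j m, f^[j] σ (m + j) = σ m := by
    intro σ j m
    induction j with
    | zero => rfl
    | succ j ih => rw [iterate_succ_apply']; exact ih
  have hstage : ∀ k j, f^[j + k] ρ j = f^[k] ρ 0 := fun k j => by
    rw [iterate_add_apply]; simpa using hshift (f^[k] ρ) j 0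
  refine ⟨fun k => f^[k] ρ 0, ⟨fun i j hij => ?_, fun k => ?_⟩, fun k hk ⟨m, hm⟩ => ?_⟩
  · wlog h : i ≤ j generalizing i j
    · exact (this j i hij.symm (le_of_not_ge h)).symm
    obtain ⟨d, rfl⟩ := Nat.exists_eq_add_of_le h
    have := (hf (d + i)).1.1 ((hstage i d).trans (hij.trans (by rw [add_comm])))
    omega
  · have := ((hf (1 + k)).1.2 0).symm
    rwa [hstage k 1, add_comm] at this
  · have := (hf k).1.1 ((hshift ρ k m).trans hm)
    omega

theorem finite_desc_singleton (x : V) : (desc t {x}).Finite := by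
  by_contra hinf
  obtain ⟨-, r, hr, -, n, rfl⟩ := Set.Infinite.nonempty hinf
  obtain ⟨s, hs, hbranch⟩ :=
    exists_isRay_forall_notMem_range hlf hacyc hone (hr.shift n) (by simpa using hinf)
  obtain ⟨a, ha, hmem⟩ := hone.exists_apply_mem_range hs (hr.shift n) 1
  exact hbranch a ha hmem

end LocallyFiniteOneEndedTree

end

theorem stmt11_general {V : Type*} (t : SimpleGraph V)
    (hlf : ∀ v : V, {w | t.Adj v w}.Finite)
    (hacyc : t.IsAcyclic)
    (hone : ∀ r₁ r₂ : ℕ → V, IsRay t r₁ → IsRay t r₂ →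
      (symmDiff (Set.range r₁) (Set.range r₂)).Finite)
    (D : Set V) (hD : D.Finite) :
    {v | ∃ r : ℕ → V, IsRay t r ∧ r 0 = v ∧ ∃ n, r n ∈ D}.Finite := by
  change (desc t D).Finite
  rw [desc_eq_biUnion]
  exact hD.biUnion fun x _ => finite_desc_singleton hlf hacyc hone x

/-- In an infinite locally finite tree `t` with one end
(every two infinite self-avoiding paths have finite symmetric difference),
for every finite set `D` of vertices, the set `desc_t D` of vertices from
which some infinite self-avoiding path meets `D` is finite. -/
theorem stmt11 {V : Type*} (t : SimpleGraph V) [Infinite V]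
    (hlf : ∀ v : V, {w | t.Adj v w}.Finite)
    (hconn : t.Connected) (hacyc : t.IsAcyclic)
    (hone : ∀ r₁ r₂ : ℕ → V, IsRay t r₁ → IsRay t r₂ →
      (symmDiff (Set.range r₁) (Set.range r₂)).Finite)
    (D : Set V) (hD : D.Finite) :
    {v | ∃ r : ℕ → V, IsRay t r ∧ r 0 = v ∧ ∃ n, r n ∈ D}.Finite :=
  stmt11_general t hlf hacyc hone D hD
end

section
/- Cycle-popping partial order: define on a poppable collection 𝔏 of coloured cycles the relation C ≺ C' if there is a chain C = C_j, C_{j−1}, …, C_0 = C' in 𝔏 such that consecutive cycles C_{r−1}, C_r share a vertex whose colour in C_r is one greater than its colour in C_{r−1}. Then C ≺ C' holds if and only if in every valid popping order of 𝔏, C' is popped before C. In particular ≺ is a (strict) partial order on 𝔏. -/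
open scoped Classical

variable {V : Type*} [DecidableEq V]

/-- `C` is a coloured cycle with respect to the stacks of arrows `σ`
(`σ v i` = head of the arrow of colour `i` at `v`): a set of (vertex, colour)
pairs along distinct vertices `g 0, …, g r` with `σ (g j) (c j) = g (j+1)`
cyclically. -/
def IsCycle (σ : V → ℕ → V) (C : Finset (V × ℕ)) : Prop :=
  ∃ (r : ℕ) (g : Fin (r + 1) → V) (c : Fin (r + 1) → ℕ),
    Function.Injective g ∧
    C = Finset.image (fun j => (g j, c j)) Finset.univ ∧
    ∀ j : Fin (r + 1), σ (g j) (c j) = g (j + 1)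

/-- a valid popping order for the collection `L` of coloured cycles: each cycle
is on top of the stacks when popped, i.e. the colour of each of its vertices
equals the number of previously popped cycles through that vertex. -/
def ValidEnum (L : Finset (Finset (V × ℕ))) (l : List (Finset (V × ℕ))) : Prop :=
  l.Nodup ∧ l.toFinset = L ∧
  ∀ (i : ℕ) (hi : i < l.length), ∀ p ∈ l.get ⟨i, hi⟩,
    p.2 = ((l.take i).filter fun C => ∃ j, (p.1, j) ∈ C).length

/-- one step of the domination relation: `C` and `C'` share a vertex whose
colour in `C` is one greater than its colour in `C'`. -/
def AdjCyc (L : Finset (Finset (V × ℕ))) (C C' : Finset (V × ℕ)) : Prop :=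
  C ∈ L ∧ C' ∈ L ∧ ∃ v i, (v, i + 1) ∈ C ∧ (v, i) ∈ C'

/-- the relation `C ≺ C'`: a chain `C = C_j, …, C_0 = C'` of consecutive
`AdjCyc`-related cycles in `L`. -/
def Prec (L : Finset (Finset (V × ℕ))) (C C' : Finset (V × ℕ)) : Prop :=
  Relation.TransGen (AdjCyc L) C C'

/-!
In a valid popping order the cycles through a vertex `v` are popped in the order of their colours
at `v`, the `k`-th of them using colour `k`. So consecutive cycles through `v` are `AdjCyc`-related,
and every chain of `≺` is respected by every popping order. Conversely, if `C ⊀ C'`, moving `C`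
and all `D` with `C ≺ D` to the front of a valid order keeps the relative order of the cycles
through each vertex, hence keeps the order valid, and in the new order `C` is popped no later
than `C'`.
-/

namespace List

variable {α : Type*} [BEq α] [LawfulBEq α]

theorem Nodup.length_filter_take_eq_idxOf {l : List α} (hl : l.Nodup) (p : α → Bool)
    {i : ℕ} (hi : i < l.length) (hp : p l[i]) :
    ((l.take i).filter p).length = (l.filter p).idxOf l[i] := by
  have hsplit : l.filter p = (l.take i).filter p ++ l[i] :: (l.drop (i + 1)).filter p := by
    conv_lhs => rw [← take_append_drop i l, drop_eq_getElem_cons hi]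
    rw [filter_append, filter_cons_of_pos hp]
  have hnot : l[i] ∉ (l.take i).filter p := fun h => by
    obtain ⟨j, hj, hji⟩ := getElem_of_mem (mem_of_mem_filter h)
    rw [getElem_take, hl.getElem_inj_iff] at hji
    rw [length_take] at hj
    omega
  rw [hsplit, idxOf_append_of_notMem hnot, idxOf_cons_self, Nat.add_zero]

theorem Nodup.idxOf_lt_idxOf_of_mem_filter {l : List α} (hl : l.Nodup) {p : α → Bool}
    {a b : α} (ha : a ∈ l.filter p) (hb : b ∈ l.filter p)
    (hab : (l.filter p).idxOf a < (l.filter p).idxOf b) : l.idxOf a < l.idxOf b := by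
  have hidx : l.Pairwise (fun a b => l.idxOf a < l.idxOf b) :=
    pairwise_iff_getElem.2 fun i j hi hj hij => by rwa [hl.idxOf_getElem, hl.idxOf_getElem]
  have := pairwise_iff_getElem.1 (hidx.filter p) _ _ (idxOf_lt_length_iff.2 ha)
    (idxOf_lt_length_iff.2 hb) hab
  rwa [getElem_idxOf, getElem_idxOf] at this

omit [BEq α] [LawfulBEq α] in
theorem filter_append_filter_not_of_pairwise {l : List α} {q : α → Bool}
    (h : l.Pairwise fun a b => q b → q a) : l.filter q ++ l.filter (!q ·) = l := by
  induction l with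
  | nil => rfl
  | cons a l ih =>
    rw [pairwise_cons] at h
    by_cases ha : q a
    · simp [ha, ih h.2]
    · have hl : ∀ b ∈ l, q b = false := fun b hb => by
        simpa using mt (h.1 b hb) ha
      have hnil : l.filter q = [] := filter_eq_nil_iff.2 fun b hb => by simp [hl b hb]
      have hall : l.filter (!q ·) = l := filter_eq_self.2 fun b hb => by simp [hl b hb]
      simp [ha, hnil, hall]

end List

section

variable {L : Finset (Finset (V × ℕ))} {l : List (Finset (V × ℕ))}

theorem validEnum_iff : ValidEnum L l ↔ l.Nodup ∧ l.toFinset = L ∧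
    ∀ C ∈ l, ∀ p ∈ C, p.2 = (l.filter fun D => ∃ j, (p.1, j) ∈ D).idxOf C := by
  refine and_congr_right fun hnd => and_congr_right fun _ => ⟨?_, ?_⟩
  · intro h C hC p hp
    obtain ⟨i, hi, rfl⟩ := List.getElem_of_mem hC
    rw [h i hi p hp, hnd.length_filter_take_eq_idxOf _ hi (by simpa using ⟨p.2, hp⟩)]
  · intro h i hi p hp
    rw [List.get_eq_getElem] at hp
    rw [h _ (List.getElem_mem hi) p hp,
      hnd.length_filter_take_eq_idxOf _ hi (by simpa using ⟨p.2, hp⟩)]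

namespace ValidEnum

variable (hl : ValidEnum L l)
include hl

theorem mem_iff {C : Finset (V × ℕ)} : C ∈ l ↔ C ∈ L := by
  rw [← hl.2.1, List.mem_toFinset]

theorem colour_eq_idxOf {C : Finset (V × ℕ)} (hC : C ∈ l) {v : V} {i : ℕ}
    (hvi : (v, i) ∈ C) :
    i = (l.filter fun D => ∃ j, (v, j) ∈ D).idxOf C :=
  (validEnum_iff.1 hl).2.2 C hC (v, i) hvi

theorem mem_getElem_filter (v : V) {k : ℕ}
    (hk : k < (l.filter fun D => ∃ j, (v, j) ∈ D).length) :
    (v, k) ∈ (l.filter fun D => ∃ j, (v, j) ∈ D)[k] := by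
  set s := l.filter fun D => ∃ j, (v, j) ∈ D
  have hmem : s[k] ∈ s := List.getElem_mem hk
  obtain ⟨j, hj⟩ : ∃ j, (v, j) ∈ s[k] := by simpa using (List.mem_filter.1 hmem).2
  have hjk : j = s.idxOf s[k] := hl.colour_eq_idxOf (List.mem_of_mem_filter hmem) hj
  rw [(hl.1.filter _).idxOf_getElem] at hjk
  rwa [hjk] at hj

theorem pairwise_prec_filter (v : V) :
    (l.filter fun D => ∃ j, (v, j) ∈ D).Pairwise fun D E => Prec L E D := by
  set s := l.filter fun D => ∃ j, (v, j) ∈ D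
  have hL : ∀ k (hk : k < s.length), s[k] ∈ L := fun k hk =>
    hl.mem_iff.1 (List.mem_of_mem_filter (List.getElem_mem hk))
  refine List.pairwise_iff_getElem.2 fun i j hi hj hij => ?_
  induction j, hij using Nat.le_induction with
  | base => exact .single ⟨hL _ hj, hL _ hi, v, i, hl.mem_getElem_filter v hj,
      hl.mem_getElem_filter v hi⟩
  | succ j hij ih =>
    have hj' : j < s.length := by omega
    exact .head ⟨hL _ hj, hL _ hj', v, j, hl.mem_getElem_filter v hj,
      hl.mem_getElem_filter v hj'⟩ (ih hj')

theorem idxOf_lt_of_adjCyc {C C' : Finset (V × ℕ)} (h : AdjCyc L C C') :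
    l.idxOf C' < l.idxOf C := by
  obtain ⟨hC, hC', v, i, hvC, hvC'⟩ := h
  have hCf : C ∈ l.filter fun D => ∃ j, (v, j) ∈ D :=
    List.mem_filter.2 ⟨hl.mem_iff.2 hC, decide_eq_true ⟨i + 1, hvC⟩⟩
  have hC'f : C' ∈ l.filter fun D => ∃ j, (v, j) ∈ D :=
    List.mem_filter.2 ⟨hl.mem_iff.2 hC', decide_eq_true ⟨i, hvC'⟩⟩
  have h₁ := hl.colour_eq_idxOf (List.mem_of_mem_filter hCf) hvC
  have h₂ := hl.colour_eq_idxOf (List.mem_of_mem_filter hC'f) hvC'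
  exact hl.1.idxOf_lt_idxOf_of_mem_filter hC'f hCf (by omega)

end ValidEnum

theorem Prec.idxOf_lt {C C' : Finset (V × ℕ)} (h : Prec L C C') (hl : ValidEnum L l) :
    l.idxOf C' < l.idxOf C := by
  induction h with
  | single hadj => exact hl.idxOf_lt_of_adjCyc hadj
  | tail _ hadj ih => exact (hl.idxOf_lt_of_adjCyc hadj).trans ih

theorem ValidEnum.filter_append_filter_not (hl : ValidEnum L l) (q : Finset (V × ℕ) → Bool)
    (hq : ∀ D E, q D → Prec L D E → q E) : ValidEnum L (l.filter q ++ l.filter (!q ·)) := by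
  have hperm := l.filter_append_perm q
  refine validEnum_iff.2 ⟨hperm.nodup_iff.2 hl.1,
    by rw [List.toFinset_eq_of_perm _ _ hperm, hl.2.1], fun C hC ⟨v, i⟩ hvi => ?_⟩
  have hsame : (l.filter q ++ l.filter (!q ·)).filter (fun D => ∃ j, (v, j) ∈ D) =
      l.filter fun D => ∃ j, (v, j) ∈ D := by
    rw [List.filter_append, List.filter_comm _ q, List.filter_comm _ (!q ·)]
    exact List.filter_append_filter_not_of_pairwise
      ((hl.pairwise_prec_filter v).imp fun {D E} hED hqE => hq E D hqE hED)
  rw [hsame]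
  exact hl.colour_eq_idxOf (hperm.mem_iff.1 hC) hvi

theorem ValidEnum.exists_idxOf_le_of_not_prec (hl : ValidEnum L l)
    {C C' : Finset (V × ℕ)} (hC : C ∈ L) (h : ¬ Prec L C C') :
    ∃ l', ValidEnum L l' ∧ l'.idxOf C ≤ l'.idxOf C' := by
  by_cases hCC' : C' = C
  · exact ⟨l, hl, by rw [hCC']⟩
  let q : Finset (V × ℕ) → Bool := fun D => D = C ∨ Prec L C D
  have hq : ∀ D E, q D → Prec L D E → q E := by
    simp only [q, decide_eq_true_eq]
    rintro D E (rfl | hCD) hDE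
    exacts [.inr hDE, .inr (hCD.trans hDE)]
  have hCq : C ∈ l.filter q := List.mem_filter.2 ⟨hl.mem_iff.2 hC, by simp [q]⟩
  have hC'q : C' ∉ l.filter q := by simp [q, hCC', h]
  refine ⟨_, hl.filter_append_filter_not q hq, ?_⟩
  rw [List.idxOf_append_of_mem hCq, List.idxOf_append_of_notMem hC'q]
  exact (List.idxOf_lt_length_iff.2 hCq).le.trans (Nat.le_add_right _ _)

end

theorem stmt12_general (L : Finset (Finset (V × ℕ)))
    (hpop : ∃ l, ValidEnum L l) :
    (∀ C ∈ L, ∀ C' ∈ L,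
      (Prec L C C' ↔ ∀ l, ValidEnum L l → l.idxOf C' < l.idxOf C)) ∧
    (∀ C ∈ L, ¬ Prec L C C) ∧
    (∀ C C' C'', Prec L C C' → Prec L C' C'' → Prec L C C'') := by
  obtain ⟨l₀, hl₀⟩ := hpop
  refine ⟨fun C hC C' _ => ⟨fun h l hl => h.idxOf_lt hl, fun h => ?_⟩,
    fun C _ h => (h.idxOf_lt hl₀).false, fun _ _ _ => .trans⟩
  by_contra hnp
  obtain ⟨l, hl, hle⟩ := hl₀.exists_idxOf_le_of_not_prec hC hnp
  exact (h l hl).not_ge hle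

/-- For a poppable collection `L` of coloured cycles,
`C ≺ C'` holds iff in every valid popping order of `L` the cycle `C'` is
popped before `C`; in particular, `≺` is a strict partial order on `L`. -/
theorem stmt12 (σ : V → ℕ → V) (L : Finset (Finset (V × ℕ)))
    (hcyc : ∀ C ∈ L, IsCycle σ C) (hpop : ∃ l, ValidEnum L l) :
    (∀ C ∈ L, ∀ C' ∈ L,
      (Prec L C C' ↔ ∀ l, ValidEnum L l → l.idxOf C' < l.idxOf C)) ∧
    (∀ C ∈ L, ¬ Prec L C C) ∧
    (∀ C C' C'', Prec L C C' → Prec L C' C'' → Prec L C C'') :=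
  stmt12_general L hpop
end
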